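/- The category of sets with ⊗ given by cartesian product and ⊕ defined by A⊕B = B if A is empty, A⊕B = A if B is empty, and A⊕B = 1 (a singleton) otherwise, admits the structure of a (non-compact) linearly distributive category; in particular there exist natural linear distribution maps A×(B⊕C) → (A×B)⊕C satisfying the linearly distributive coherences. -/

import Mathlib

open CategoryTheory CategoryTheory.MonoidalCategory

universe u

/-- The data of a linearly distributive category structure on a monoidal category
`(C, ⊗, ⊤)`: a second "par" tensor with unit `⊥`, associativity and unit isomorphisms
(oriented as in Cockett–Pastro), and the two linear distributions. -/
structure LDData (C : Type*) [Category C] [MonoidalCategory C] where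
  par : C → C → C
  parMap : ∀ {X₁ X₂ Y₁ Y₂ : C}, (X₁ ⟶ X₂) → (Y₁ ⟶ Y₂) → (par X₁ Y₁ ⟶ par X₂ Y₂)
  bot : C
  aPar : ∀ X Y Z : C, par X (par Y Z) ≅ par (par X Y) Z
  lPar : ∀ X : C, X ≅ par bot X
  rPar : ∀ X : C, X ≅ par X bot
  dl : ∀ X Y Z : C, X ⊗ par Y Z ⟶ par (X ⊗ Y) Z
  dr : ∀ X Y Z : C, par Y Z ⊗ X ⟶ par Y (Z ⊗ X)

/-- The Cockett–Seely coherence conditions making `D : LDData C` a linearly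
distributive category: functoriality of the par, naturality of all the structure
maps, the monoidal coherences (pentagon and triangle) for the par, and the
coherence conditions relating the linear distributions to the units and
associativities of the two tensors. -/
structure IsLinDistrib {C : Type*} [Category C] [MonoidalCategory C] (D : LDData C) : Prop where
  parMap_id : ∀ X Y : C, D.parMap (𝟙 X) (𝟙 Y) = 𝟙 (D.par X Y)
  parMap_comp : ∀ {X₁ X₂ X₃ Y₁ Y₂ Y₃ : C} (f : X₁ ⟶ X₂) (f' : X₂ ⟶ X₃)
      (g : Y₁ ⟶ Y₂) (g' : Y₂ ⟶ Y₃),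
      D.parMap (f ≫ f') (g ≫ g') = D.parMap f g ≫ D.parMap f' g'
  aPar_natural : ∀ {X X' Y Y' Z Z' : C} (f : X ⟶ X') (g : Y ⟶ Y') (h : Z ⟶ Z'),
      D.parMap f (D.parMap g h) ≫ (D.aPar X' Y' Z').hom =
        (D.aPar X Y Z).hom ≫ D.parMap (D.parMap f g) h
  lPar_natural : ∀ {X Y : C} (f : X ⟶ Y),
      f ≫ (D.lPar Y).hom = (D.lPar X).hom ≫ D.parMap (𝟙 D.bot) f
  rPar_natural : ∀ {X Y : C} (f : X ⟶ Y),
      f ≫ (D.rPar Y).hom = (D.rPar X).hom ≫ D.parMap f (𝟙 D.bot)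
  par_pentagon : ∀ W X Y Z : C,
      (D.aPar W X (D.par Y Z)).hom ≫ (D.aPar (D.par W X) Y Z).hom =
        D.parMap (𝟙 W) (D.aPar X Y Z).hom ≫ (D.aPar W (D.par X Y) Z).hom ≫
          D.parMap (D.aPar W X Y).hom (𝟙 Z)
  par_triangle : ∀ X Y : C,
      D.parMap (𝟙 X) (D.lPar Y).hom ≫ (D.aPar X D.bot Y).hom = D.parMap (D.rPar X).hom (𝟙 Y)
  dl_natural : ∀ {X X' Y Y' Z Z' : C} (f : X ⟶ X') (g : Y ⟶ Y') (h : Z ⟶ Z'),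
      (f ⊗ₘ D.parMap g h) ≫ D.dl X' Y' Z' = D.dl X Y Z ≫ D.parMap (f ⊗ₘ g) h
  dr_natural : ∀ {X X' Y Y' Z Z' : C} (f : X ⟶ X') (g : Y ⟶ Y') (h : Z ⟶ Z'),
      (D.parMap g h ⊗ₘ f) ≫ D.dr X' Y' Z' = D.dr X Y Z ≫ D.parMap g (h ⊗ₘ f)
  dl_unit : ∀ X Y : C, (X ◁ (D.rPar Y).hom) ≫ D.dl X Y D.bot = (D.rPar (X ⊗ Y)).hom
  dr_unit : ∀ X Y : C, ((D.lPar Y).hom ▷ X) ≫ D.dr X D.bot Y = (D.lPar (Y ⊗ X)).hom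
  dl_tensor_assoc : ∀ W X Y Z : C,
      D.dl (W ⊗ X) Y Z ≫ D.parMap (α_ W X Y).hom (𝟙 Z) =
        (α_ W X (D.par Y Z)).hom ≫ (W ◁ D.dl X Y Z) ≫ D.dl W (X ⊗ Y) Z
  dl_par_assoc : ∀ W X Y Z : C,
      D.dl W X (D.par Y Z) ≫ (D.aPar (W ⊗ X) Y Z).hom =
        (W ◁ (D.aPar X Y Z).hom) ≫ D.dl W (D.par X Y) Z ≫ D.parMap (D.dl W X Y) (𝟙 Z)

open scoped Classical in
/-- Koslowski's par on the category of sets: `A ⊕ B = B` if `A` is empty,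
`A ⊕ B = A` if `B` is empty, and `A ⊕ B = 1` (a singleton) otherwise. -/
noncomputable def kPar (A B : Type u) : Type u :=
  if Nonempty A then (if Nonempty B then PUnit else A) else B

/-!
In each of the three cases of its definition, `kPar A B` is the pushout of the two projections
`A ← A × B → B`, i.e. the disjoint union `A ⊔ B` with every `a` glued to every `b`. This
description is uniform, so the par acquires injections `inl`, `inr` and a universal property,
and every structure map is induced by the evident map on disjoint unions (the left distribution
sends `(x, inl y)` to `inl (x, y)` and `(x, inr z)` to `inr z`). Every element of a par is of the
form `inl _` or `inr _`, so each coherence equation need only be checked on these generators,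
where both sides compute to the same element.
-/

namespace kPar

abbrev ProjPushout (A B : Type u) : Type u :=
  Limits.Types.Pushout (↾(Prod.fst : A × B → A)) (↾(Prod.snd : A × B → B))

variable {A B : Type u}

def ProjPushout.mk (s : A ⊕ B) : ProjPushout A B := Quot.mk _ s

theorem ProjPushout.mk_inl_eq_mk_inr (a : A) (b : B) :
    ProjPushout.mk (.inl a) = ProjPushout.mk (.inr b) :=
  Quot.sound ⟨(a, b)⟩

theorem projPushout_subsingleton [Nonempty A] [Nonempty B] : Subsingleton (ProjPushout A B) := by
  obtain ⟨a₀⟩ := ‹Nonempty A›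
  obtain ⟨b₀⟩ := ‹Nonempty B›
  have eq_inr (q : ProjPushout A B) : q = ProjPushout.mk (.inr b₀) := by
    induction q using Quot.ind with
    | mk s =>
      rcases s with a | b
      · exact ProjPushout.mk_inl_eq_mk_inr a b₀
      · exact (ProjPushout.mk_inl_eq_mk_inr a₀ b).symm.trans (ProjPushout.mk_inl_eq_mk_inr a₀ b₀)
  exact ⟨fun q q' => (eq_inr q).trans (eq_inr q').symm⟩

def projPushoutEquivSum [IsEmpty (A × B)] : ProjPushout A B ≃ A ⊕ B where
  toFun := Quot.lift id (by rintro _ _ ⟨s⟩; exact isEmptyElim s)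
  invFun := Quot.mk _
  left_inv := Quot.ind fun _ => rfl
  right_inv _ := rfl

open scoped Classical in
noncomputable def projPushoutEquiv (A B : Type u) : ProjPushout A B ≃ kPar A B :=
  if hA : Nonempty A then
    if hB : Nonempty B then
      have := projPushout_subsingleton (A := A) (B := B)
      (equivOfSubsingletonOfSubsingleton (α := ProjPushout A B) (fun _ => PUnit.unit) fun _ =>
        ProjPushout.mk (.inl hA.some)).trans (Equiv.cast (by simp [kPar, hA, hB]))
    else
      have := not_nonempty_iff.mp hB
      (projPushoutEquivSum.trans (Equiv.sumEmpty A B)).trans (Equiv.cast (by simp [kPar, hA, hB]))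
  else
    have := not_nonempty_iff.mp hA
    (projPushoutEquivSum.trans (Equiv.emptySum A B)).trans (Equiv.cast (by simp [kPar, hA]))

noncomputable def inl (a : A) : kPar A B := projPushoutEquiv A B (ProjPushout.mk (.inl a))

noncomputable def inr (b : B) : kPar A B := projPushoutEquiv A B (ProjPushout.mk (.inr b))

theorem inl_eq_inr (a : A) (b : B) : (inl a : kPar A B) = inr b :=
  congrArg (projPushoutEquiv A B) (ProjPushout.mk_inl_eq_mk_inr a b)

@[elab_as_elim]
theorem ind {motive : kPar A B → Prop} (inl : ∀ a, motive (inl a)) (inr : ∀ b, motive (inr b))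
    (k : kPar A B) : motive k := by
  obtain ⟨q, rfl⟩ := (projPushoutEquiv A B).surjective k
  induction q using Quot.ind with
  | mk s => rcases s with a | b; exacts [inl a, inr b]

variable {T : Type u}

noncomputable def lift (f : A → T) (g : B → T) (h : ∀ a b, f a = g b) : kPar A B → T :=
  fun k => Quot.lift (Sum.elim f g) (by rintro _ _ ⟨⟨a, b⟩⟩; exact h a b)
    ((projPushoutEquiv A B).symm k)

@[simp]
theorem lift_inl (f : A → T) (g : B → T) (h : ∀ a b, f a = g b) (a : A) :
    lift f g h (inl a) = f a := by
  rw [lift, inl, Equiv.symm_apply_apply]; rfl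

@[simp]
theorem lift_inr (f : A → T) (g : B → T) (h : ∀ a b, f a = g b) (b : B) :
    lift f g h (inr b) = g b := by
  rw [lift, inr, Equiv.symm_apply_apply]; rfl

variable {A' B' : Type u}

noncomputable def map (f : A → A') (g : B → B') : kPar A B → kPar A' B' :=
  lift (inl ∘ f) (inr ∘ g) fun _ _ => inl_eq_inr _ _

@[simp]
theorem map_inl (f : A → A') (g : B → B') (a : A) : map f g (inl a) = inl (f a) :=
  lift_inl ..

@[simp]
theorem map_inr (f : A → A') (g : B → B') (b : B) : map f g (inr b) = inr (g b) :=
  lift_inr ..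

variable (X Y Z : Type u)

noncomputable def assoc : kPar X (kPar Y Z) ≃ kPar (kPar X Y) Z where
  toFun := lift (inl ∘ inl) (lift (inl ∘ inr) inr fun _ _ => inl_eq_inr _ _) fun x k => by
    induction k using ind with
    | inl y => simpa using congrArg inl (inl_eq_inr x y)
    | inr z => simpa using inl_eq_inr (inl x) z
  invFun := lift (lift inl (inr ∘ inl) fun _ _ => inl_eq_inr _ _) (inr ∘ inr) fun k z => by
    induction k using ind with
    | inl x => simpa using inl_eq_inr x (inr z)
    | inr y => simpa using congrArg inr (inl_eq_inr y z)
  left_inv k := by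
    induction k using ind with
    | inl x => simp
    | inr k => induction k using ind <;> simp
  right_inv k := by
    induction k using ind with
    | inl k => induction k using ind <;> simp
    | inr z => simp

@[simp] theorem assoc_inl (x : X) : assoc X Y Z (inl x) = inl (inl x) := by simp [assoc]
@[simp] theorem assoc_inr_inl (y : Y) : assoc X Y Z (inr (inl y)) = inl (inr y) := by simp [assoc]
@[simp] theorem assoc_inr_inr (z : Z) : assoc X Y Z (inr (inr z)) = inr z := by simp [assoc]

@[simps apply]
noncomputable def emptyLeftEquiv (E : Type u) [IsEmpty E] : X ≃ kPar E X where
  toFun := inr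
  invFun := lift isEmptyElim id fun e => isEmptyElim e
  left_inv := lift_inr _ _ _
  right_inv k := by induction k using ind with
    | inl e => exact isEmptyElim e
    | inr x => simp

@[simps apply]
noncomputable def emptyRightEquiv (E : Type u) [IsEmpty E] : X ≃ kPar X E where
  toFun := inl
  invFun := lift id isEmptyElim fun _ e => isEmptyElim e
  left_inv := lift_inl _ _ _
  right_inv k := by induction k using ind with
    | inl x => simp
    | inr e => exact isEmptyElim e

noncomputable def distribLeft : X × kPar Y Z → kPar (X × Y) Z := fun p =>
  lift (fun y => inl (p.1, y)) inr (fun _ _ => inl_eq_inr _ _) p.2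

noncomputable def distribRight : kPar Y Z × X → kPar Y (Z × X) := fun p =>
  lift inl (fun z => inr (z, p.2)) (fun _ _ => inl_eq_inr _ _) p.1

variable {X Y Z}

@[simp] theorem distribLeft_inl (x : X) (y : Y) :
    distribLeft X Y Z (x, inl y) = inl (x, y) := lift_inl ..
@[simp] theorem distribLeft_inr (x : X) (z : Z) :
    distribLeft X Y Z (x, inr z) = inr z := lift_inr ..
@[simp] theorem distribRight_inl (y : Y) (x : X) :
    distribRight X Y Z (inl y, x) = inl y := lift_inl ..
@[simp] theorem distribRight_inr (z : Z) (x : X) :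
    distribRight X Y Z (inr z, x) = inr (z, x) := lift_inr ..

end kPar

open kPar

noncomputable def kParLDData : LDData (Type u) where
  par := kPar
  parMap f g := ↾(map f g)
  bot := PEmpty
  aPar X Y Z := (assoc X Y Z).toIso
  lPar X := (emptyLeftEquiv X PEmpty).toIso
  rPar X := (emptyRightEquiv X PEmpty).toIso
  dl X Y Z := ↾(distribLeft X Y Z)
  dr X Y Z := ↾(distribRight X Y Z)

theorem isLinDistrib_kParLDData : IsLinDistrib kParLDData.{u} where
  parMap_id X Y := by
    ext k; induction k using ind <;> simp [kParLDData]
  parMap_comp f f' g g' := by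
    ext k; induction k using ind <;> simp [kParLDData]
  aPar_natural f g h := by
    ext k; induction k using ind with
    | inl x => simp [kParLDData]
    | inr k => induction k using ind <;> simp [kParLDData]
  lPar_natural f := by ext x; simp [kParLDData]
  rPar_natural f := by ext x; simp [kParLDData]
  par_pentagon W X Y Z := by
    ext k; induction k using ind with
    | inl w => simp [kParLDData]
    | inr k => induction k using ind with
      | inl x => simp [kParLDData]
      | inr k => induction k using ind <;> simp [kParLDData]
  par_triangle X Y := by
    ext k; induction k using ind <;> simp [kParLDData]
  dl_natural f g h := by
    ext ⟨x, k⟩; induction k using ind <;> simp [kParLDData, types_tensorObj_def]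
  dr_natural f g h := by
    ext ⟨k, x⟩; induction k using ind <;> simp [kParLDData, types_tensorObj_def]
  dl_unit X Y := by ext ⟨x, y⟩; simp [kParLDData, types_tensorObj_def]
  dr_unit X Y := by ext ⟨y, x⟩; simp [kParLDData, types_tensorObj_def]
  dl_tensor_assoc W X Y Z := by
    ext ⟨⟨w, x⟩, k⟩; induction k using ind <;> simp [kParLDData, types_tensorObj_def]
  dl_par_assoc W X Y Z := by
    ext ⟨w, k⟩; induction k using ind with
    | inl x => simp [kParLDData, types_tensorObj_def]
    | inr k => induction k using ind <;> simp [kParLDData, types_tensorObj_def]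

/-- The category of sets with ⊗ the cartesian product and ⊕ the Koslowski par
(with unit the empty set) admits the structure of a linearly distributive
category; in particular there exist natural linear distributions
`A × (B ⊕ C) → (A × B) ⊕ C` satisfying the linearly distributive coherences. -/
theorem stmt2 :
    ∃ D : LDData (Type u), IsLinDistrib D ∧ D.par = kPar ∧ D.bot = PEmpty :=
  ⟨kParLDData, isLinDistrib_kParLDData, rfl, rfl⟩
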